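/- arXiv:1211.3251 — 4 statements merged into one kernel-verified Lean document; each statement's English description precedes it below -/
import Mathlib

section
/- Let c > 0 and let f : ℝ → ℝ be twice continuously differentiable on [−c, c] with f(−c) = f(c) = 0. If the signed curvature κ(x) = f''(x)/(1 + f'(x)^2)^(3/2) is strictly increasing on [−c, c], then α + β > 0, where α = arctan(f'(−c)) and β = arctan(f'(c)). (Modified Vogt's theorem for a spiral arc in normalized position.) -/
/-- Signed curvature of the graph of `f` at abscissa `x`:
`κ(x) = f''(x) / (1 + f'(x)^2)^(3/2)`. -/
noncomputable def graphCurvature (f : ℝ → ℝ) (x : ℝ) : ℝ :=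
  deriv (deriv f) x / (1 + deriv f x ^ 2) ^ ((3 : ℝ) / 2)

/-!
The sine of the tangent angle, `S = sin ∘ arctan ∘ f'`, has derivative `κ`, so it is strictly
convex on `[a, b]`. Rolle's theorem for `x ↦ f x - f (a + b - x)` gives a `ξ` with
`f' ξ + f' (a + b - ξ) = 0`, so `S ξ + S (a + b - ξ) = 0` as `S` is odd, and convexity yields
`0 < S a + S b`. Since `S` and `arctan` are odd and increasing, this is `0 < α + β`.

`deriv f` is `0` at an endpoint where `f` is not differentiable; then `deriv (deriv f)`, hence `κ`,
is `0` there too, which fixes the sign of `κ` inside, and Rolle's theorem makes the one-sided slope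
at that endpoint negative, so replacing it by `0` only increases `α + β`.
-/

open Set Filter Real

theorem Function.Odd.add_pos_iff_of_strictMono {α β : Type*} [AddCommGroup α] [LinearOrder α]
    [IsOrderedAddMonoid α] [AddCommGroup β] [LinearOrder β] [IsOrderedAddMonoid β] {g : α → β}
    (hodd : Function.Odd g) (hg : StrictMono g) {x y : α} : 0 < g x + g y ↔ 0 < x + y := by
  rw [← neg_lt_iff_pos_add, ← neg_lt_iff_pos_add, ← hodd, hg.lt_iff_lt]

theorem StrictConvexOn.apply_add_apply_reflect_lt {g : ℝ → ℝ} {a b x : ℝ}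
    (hg : StrictConvexOn ℝ (Icc a b) g) (hx : x ∈ Ioo a b) :
    g x + g (a + b - x) < g a + g b := by
  have hab : a < b := hx.1.trans hx.2
  have hba : 0 < b - a := sub_pos.2 hab
  set μ := (b - x) / (b - a)
  set ν := (x - a) / (b - a)
  have hμ : 0 < μ := div_pos (by linarith [hx.2]) hba
  have hν : 0 < ν := div_pos (by linarith [hx.1]) hba
  have hμν : μ + ν = 1 := by rw [← add_div, div_eq_one_iff_eq hba.ne']; ring
  have hmem_a : a ∈ Icc a b := left_mem_Icc.2 hab.le
  have hmem_b : b ∈ Icc a b := right_mem_Icc.2 hab.le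
  have h₁ := hg.2 hmem_a hmem_b (by linarith) hμ hν hμν
  have h₂ := hg.2 hmem_a hmem_b (by linarith) hν hμ (by linarith)
  have e₁ : μ • a + ν • b = x := by simp only [μ, ν, smul_eq_mul]; field_simp; ring
  have e₂ : ν • a + μ • b = a + b - x := by simp only [μ, ν, smul_eq_mul]; field_simp; ring
  rw [e₁] at h₁
  rw [e₂] at h₂
  simp only [smul_eq_mul] at h₁ h₂
  linear_combination h₁ + h₂ + (g a + g b) * hμν

theorem hasDerivAt_sin_arctan (t : ℝ) :
    HasDerivAt (fun t ↦ sin (arctan t)) ((1 + t ^ 2) ^ ((3 : ℝ) / 2))⁻¹ t := by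
  have hpos : 0 < 1 + t ^ 2 := by positivity
  convert (hasDerivAt_arctan t).sin using 1
  rw [cos_arctan, show (3 : ℝ) / 2 = 1 + 1 / 2 by norm_num, rpow_add hpos, rpow_one,
    ← sqrt_eq_rpow]
  field_simp

theorem deriv_eq_derivWithin_or_eq_zero {f : ℝ → ℝ} {s t : Set ℝ} {x : ℝ}
    (hs : UniqueDiffWithinAt ℝ s x) (hxt : x ∈ closure t)
    (heq : EqOn (deriv f) (derivWithin f s) t) (hcont : ContinuousWithinAt (derivWithin f s) t x) :
    deriv f x = derivWithin f s x ∨ (deriv f x = 0 ∧ deriv (deriv f) x = 0) := by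
  by_cases hd : DifferentiableAt ℝ f x
  · exact .inl (hd.derivWithin hs).symm
  by_cases hdd : DifferentiableAt ℝ (deriv f) x
  · have := mem_closure_iff_nhdsWithin_neBot.mp hxt
    refine .inl (tendsto_nhds_unique (hdd.continuousAt.continuousWithinAt (s := t)) ?_)
    exact hcont.congr' (eventually_nhdsWithin_of_forall fun y hy ↦ (heq hy).symm)
  · exact .inr ⟨deriv_zero_of_not_differentiableAt hd, deriv_zero_of_not_differentiableAt hdd⟩

noncomputable def sinTangentAngle (f : ℝ → ℝ) (s : Set ℝ) (x : ℝ) : ℝ :=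
  sin (arctan (derivWithin f s x))

section SpiralArc

variable {f : ℝ → ℝ} {a b x : ℝ}

theorem derivWithin_Icc_eq_deriv (hx : x ∈ Ioo a b) : derivWithin f (Icc a b) x = deriv f x :=
  derivWithin_of_mem_nhds (Icc_mem_nhds hx.1 hx.2)

theorem hasDerivAt_of_contDiffOn_Icc (hf : ContDiffOn ℝ 2 f (Icc a b)) (hx : x ∈ Ioo a b) :
    HasDerivAt f (derivWithin f (Icc a b) x) x := by
  rw [derivWithin_Icc_eq_deriv hx]
  exact ((hf.differentiableOn (by norm_num)).differentiableAt (Icc_mem_nhds hx.1 hx.2)).hasDerivAt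

theorem hasDerivAt_derivWithin_Icc (hf : ContDiffOn ℝ 2 f (Icc a b)) (hx : x ∈ Ioo a b) :
    HasDerivAt (derivWithin f (Icc a b)) (deriv (deriv f) x) x := by
  have hC1 : ContDiffOn ℝ 1 (deriv f) (Ioo a b) :=
    (hf.mono Ioo_subset_Icc_self).deriv_of_isOpen isOpen_Ioo (by norm_num)
  have hdd : DifferentiableAt ℝ (deriv f) x :=
    (hC1.differentiableOn one_ne_zero).differentiableAt (isOpen_Ioo.mem_nhds hx)
  exact hdd.hasDerivAt.congr_of_eventuallyEq
    (eventually_of_mem (isOpen_Ioo.mem_nhds hx) fun y hy ↦ derivWithin_Icc_eq_deriv hy)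

theorem hasDerivAt_sinTangentAngle (hf : ContDiffOn ℝ 2 f (Icc a b)) (hx : x ∈ Ioo a b) :
    HasDerivAt (sinTangentAngle f (Icc a b)) (graphCurvature f x) x := by
  refine ((hasDerivAt_sin_arctan _).comp x (hasDerivAt_derivWithin_Icc hf hx)).congr_deriv ?_
  rw [graphCurvature, derivWithin_Icc_eq_deriv hx, inv_mul_eq_div]

theorem continuousOn_derivWithin_Icc (hab : a < b) (hf : ContDiffOn ℝ 2 f (Icc a b)) :
    ContinuousOn (derivWithin f (Icc a b)) (Icc a b) :=
  hf.continuousOn_derivWithin (uniqueDiffOn_Icc hab) (by norm_num)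

theorem continuousOn_sinTangentAngle (hab : a < b) (hf : ContDiffOn ℝ 2 f (Icc a b)) :
    ContinuousOn (sinTangentAngle f (Icc a b)) (Icc a b) :=
  (continuous_sin.comp continuous_arctan).comp_continuousOn (continuousOn_derivWithin_Icc hab hf)

theorem strictConvexOn_sinTangentAngle (hab : a < b) (hf : ContDiffOn ℝ 2 f (Icc a b))
    (hmono : StrictMonoOn (graphCurvature f) (Ioo a b)) :
    StrictConvexOn ℝ (Icc a b) (sinTangentAngle f (Icc a b)) := by
  refine StrictMonoOn.strictConvexOn_of_deriv (convex_Icc a b)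
    (continuousOn_sinTangentAngle hab hf) ?_
  rw [interior_Icc]
  intro x hx y hy hxy
  rw [(hasDerivAt_sinTangentAngle hf hx).deriv, (hasDerivAt_sinTangentAngle hf hy).deriv]
  exact hmono hx hy hxy

theorem derivWithin_Icc_left_add_right_pos (hab : a < b) (hf : ContDiffOn ℝ 2 f (Icc a b))
    (hfab : f a = f b) (hmono : StrictMonoOn (graphCurvature f) (Ioo a b)) :
    0 < derivWithin f (Icc a b) a + derivWithin f (Icc a b) b := by
  set f₁ := derivWithin f (Icc a b)
  have hreflect : ∀ y ∈ Ioo a b, a + b - y ∈ Ioo a b := fun y hy ↦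
    ⟨by linarith [hy.2], by linarith [hy.1]⟩
  have hcont : ContinuousOn (fun y ↦ f y - f (a + b - y)) (Icc a b) :=
    hf.continuousOn.sub (hf.continuousOn.comp (continuousOn_const.sub continuousOn_id)
      fun y hy ↦ ⟨by linarith [hy.2], by linarith [hy.1]⟩)
  have hderiv : ∀ y ∈ Ioo a b,
      HasDerivAt (fun y ↦ f y - f (a + b - y)) (f₁ y + f₁ (a + b - y)) y := by
    intro y hy
    refine ((hasDerivAt_of_contDiffOn_Icc hf hy).sub ((hasDerivAt_of_contDiffOn_Icc hf
      (hreflect y hy)).comp y ((hasDerivAt_id y).const_sub (a + b)))).congr_deriv (by ring)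
  obtain ⟨ξ, hξ, hξ₀⟩ := exists_hasDerivAt_eq_zero hab hcont (by simp [hfab]) hderiv
  have hsym := (strictConvexOn_sinTangentAngle hab hf hmono).apply_add_apply_reflect_lt hξ
  have hzero : sinTangentAngle f (Icc a b) ξ + sinTangentAngle f (Icc a b) (a + b - ξ) = 0 := by
    change sin (arctan (f₁ ξ)) + sin (arctan (f₁ (a + b - ξ))) = 0
    rw [eq_neg_of_add_eq_zero_left hξ₀, arctan_neg, sin_neg, neg_add_cancel]
  rw [← (show Function.Odd (fun t ↦ sin (arctan t)) from fun t ↦ by simp [arctan_neg])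
    |>.add_pos_iff_of_strictMono sin_arctan_strictMono]
  exact hzero ▸ hsym

theorem derivWithin_Icc_left_neg (hab : a < b) (hf : ContDiffOn ℝ 2 f (Icc a b))
    (hfab : f a = f b) (hpos : ∀ x ∈ Ioo a b, 0 < graphCurvature f x) :
    derivWithin f (Icc a b) a < 0 := by
  obtain ⟨ξ, hξ, hξ₀⟩ := exists_hasDerivAt_eq_zero hab hf.continuousOn hfab fun x hx ↦
    hasDerivAt_of_contDiffOn_Icc hf hx
  have hG : StrictMonoOn (sinTangentAngle f (Icc a b)) (Icc a b) := by
    refine strictMonoOn_of_deriv_pos (convex_Icc a b) (continuousOn_sinTangentAngle hab hf) ?_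
    rw [interior_Icc]
    intro x hx
    rw [(hasDerivAt_sinTangentAngle hf hx).deriv]
    exact hpos x hx
  have := hG (left_mem_Icc.2 hab.le) (Ioo_subset_Icc_self hξ) hξ.1
  exact hξ₀ ▸ sin_arctan_strictMono.lt_iff_lt.mp this

theorem derivWithin_Icc_right_neg (hab : a < b) (hf : ContDiffOn ℝ 2 f (Icc a b))
    (hfab : f a = f b) (hneg : ∀ x ∈ Ioo a b, graphCurvature f x < 0) :
    derivWithin f (Icc a b) b < 0 := by
  obtain ⟨ξ, hξ, hξ₀⟩ := exists_hasDerivAt_eq_zero hab hf.continuousOn hfab fun x hx ↦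
    hasDerivAt_of_contDiffOn_Icc hf hx
  have hG : StrictAntiOn (sinTangentAngle f (Icc a b)) (Icc a b) := by
    refine strictAntiOn_of_deriv_neg (convex_Icc a b) (continuousOn_sinTangentAngle hab hf) ?_
    rw [interior_Icc]
    intro x hx
    rw [(hasDerivAt_sinTangentAngle hf hx).deriv]
    exact hneg x hx
  have := hG (Ioo_subset_Icc_self hξ) (right_mem_Icc.2 hab.le) hξ.2
  exact hξ₀ ▸ sin_arctan_strictMono.lt_iff_lt.mp this

theorem derivWithin_Icc_left_le_deriv (hab : a < b) (hf : ContDiffOn ℝ 2 f (Icc a b))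
    (hfab : f a = f b) (hmono : StrictMonoOn (graphCurvature f) (Icc a b)) :
    derivWithin f (Icc a b) a ≤ deriv f a := by
  have ha : a ∈ Icc a b := left_mem_Icc.2 hab.le
  rcases deriv_eq_derivWithin_or_eq_zero (uniqueDiffOn_Icc hab a ha) (closure_Ioo hab.ne ▸ ha)
    (fun x hx ↦ (derivWithin_Icc_eq_deriv hx).symm)
    ((continuousOn_derivWithin_Icc hab hf a ha).mono Ioo_subset_Icc_self) with h | ⟨h₀, h₂⟩
  · exact h.ge
  · refine h₀ ▸ (derivWithin_Icc_left_neg hab hf hfab fun x hx ↦ ?_).le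
    simpa [graphCurvature, h₂] using hmono ha (Ioo_subset_Icc_self hx) hx.1

theorem derivWithin_Icc_right_le_deriv (hab : a < b) (hf : ContDiffOn ℝ 2 f (Icc a b))
    (hfab : f a = f b) (hmono : StrictMonoOn (graphCurvature f) (Icc a b)) :
    derivWithin f (Icc a b) b ≤ deriv f b := by
  have hb : b ∈ Icc a b := right_mem_Icc.2 hab.le
  rcases deriv_eq_derivWithin_or_eq_zero (uniqueDiffOn_Icc hab b hb) (closure_Ioo hab.ne ▸ hb)
    (fun x hx ↦ (derivWithin_Icc_eq_deriv hx).symm)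
    ((continuousOn_derivWithin_Icc hab hf b hb).mono Ioo_subset_Icc_self) with h | ⟨h₀, h₂⟩
  · exact h.ge
  · refine h₀ ▸ (derivWithin_Icc_right_neg hab hf hfab fun x hx ↦ ?_).le
    simpa [graphCurvature, h₂] using hmono (Ioo_subset_Icc_self hx) hb hx.2

end SpiralArc

/-- Modified Vogt's theorem for a normalized spiral arc with strictly
increasing curvature: `α + β > 0`. -/
theorem modified_vogt (c : ℝ) (hc : 0 < c) (f : ℝ → ℝ)
    (hf : ContDiffOn ℝ 2 f (Set.Icc (-c) c))
    (hfl : f (-c) = 0) (hfr : f c = 0)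
    (hmono : StrictMonoOn (graphCurvature f) (Set.Icc (-c) c)) :
    0 < Real.arctan (deriv f (-c)) + Real.arctan (deriv f c) := by
  have hc' : -c < c := by linarith
  have hfc : f (-c) = f c := hfl.trans hfr.symm
  have hsum := derivWithin_Icc_left_add_right_pos hc' hf hfc (hmono.mono Ioo_subset_Icc_self)
  rw [(show Function.Odd arctan from arctan_neg).add_pos_iff_of_strictMono arctan_strictMono]
  linarith [derivWithin_Icc_left_le_deriv hc' hf hfc hmono,
    derivWithin_Icc_right_le_deriv hc' hf hfc hmono]
end

section
/- Lens theorem (increasing curvature): Let c > 0 and let f : ℝ → ℝ be twice continuously differentiable on [−c, c] with f(−c) = f(c) = 0, and suppose the signed curvature κ(x) = f''(x)/(1 + f'(x)^2)^(3/2) is strictly increasing on [−c, c]. Then for every x with |x| < c, A(x; c, −β) < f(x) < A(x; c, α), where α = arctan(f'(−c)) and β = arctan(f'(c)). -/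
/-- The circular arc from `(−c, 0)` to `(c, 0)` whose tangent at `(−c, 0)`
makes angle `φ` with the positive `x`-axis, as a function of `x`. -/
noncomputable def arcA (c φ x : ℝ) : ℝ :=
  ((c ^ 2 - x ^ 2) * Real.sin φ) /
    (c * Real.cos φ + Real.sqrt (c ^ 2 - x ^ 2 * Real.sin φ ^ 2))

/-!
Compare `f` with the circular arc `g` through `(±c, 0)` tangent to `f` at `-c`; its curvature is the
constant `-sin α / c`. If `f ≥ g` somewhere inside, `f - g` has an interior maximum `m`, where
tangency forces `κ_f(m) ≤ κ_g`. As `κ_f` increases, `κ_f < κ_g` on `[-c, m)`, so `f` dips below `g`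
just after their common tangency at `-c`; then `g - f` has an interior maximum `μ < m`, where
`κ_f(μ) ≥ κ_g`, a contradiction. The lower bound is the upper bound for the reflection
`y ↦ -f (-y)`.
-/

open Set Filter Topology

theorem HasDerivWithinAt.eventually_pos_right {v : ℝ → ℝ} {L x : ℝ}
    (hv : HasDerivWithinAt v L (Ioi x) x) (hx : v x = 0) (hL : 0 < L) :
    ∀ᶠ y in 𝓝[>] x, 0 < v y := by
  rw [hasDerivWithinAt_iff_tendsto_slope, sdiff_singleton_eq_self self_notMem_Ioi] at hv
  filter_upwards [hv.eventually (lt_mem_nhds hL), self_mem_nhdsWithin] with y hslope hy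
  rw [slope_def_field, hx, sub_zero] at hslope
  exact (div_pos_iff_of_pos_right (sub_pos.2 hy)).1 hslope

theorem eventually_lt_of_derivWithin_eq_zero_of_pos {w : ℝ → ℝ} {a b x : ℝ}
    (hw : ContDiffOn ℝ 2 w (Icc a b)) (hx : x ∈ Ico a b)
    (h1 : derivWithin w (Icc a b) x = 0)
    (h2 : 0 < derivWithin (derivWithin w (Icc a b)) (Icc a b) x) :
    ∀ᶠ y in 𝓝[>] x, w x < w y := by
  have hab : a < b := hx.1.trans_lt hx.2
  have hw' : DifferentiableOn ℝ (derivWithin w (Icc a b)) (Icc a b) :=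
    (hw.derivWithin (m := 1) (uniqueDiffOn_Icc hab) (by norm_num)).differentiableOn one_ne_zero
  have hpos := ((hw' x (Ico_subset_Icc_self hx)).hasDerivWithinAt.mono_of_mem_nhdsWithin
    (Icc_mem_nhdsGT_of_mem hx)).eventually_pos_right h1 h2
  obtain ⟨u, hxu, hu⟩ := mem_nhdsGT_iff_exists_Ioo_subset.1 hpos
  filter_upwards [Ioo_mem_nhdsGT (lt_min hxu hx.2)] with y hy
  have hsub : Icc x y ⊆ Icc a b := Icc_subset_Icc hx.1 (hy.2.le.trans (min_le_right _ _))
  refine strictMonoOn_of_deriv_pos (convex_Icc x y) (hw.continuousOn.mono hsub) (fun t ht => ?_)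
    (left_mem_Icc.2 hy.1.le) (right_mem_Icc.2 hy.1.le) hy.1
  rw [interior_Icc] at ht
  rw [← derivWithin_of_mem_nhds (Icc_mem_nhds (hx.1.trans_lt ht.1)
    (ht.2.trans_le (hy.2.le.trans (min_le_right _ _))))]
  exact hu ⟨ht.1, ht.2.trans (hy.2.trans_le (min_le_left _ _))⟩

/-- Unlike `graphCurvature`, this is meaningful at the ends of `Icc a b`, where it is the continuous
extension of the curvature from the interior. -/
noncomputable def curvatureWithin (s : Set ℝ) (f : ℝ → ℝ) (x : ℝ) : ℝ :=
  derivWithin (derivWithin f s) s x / (1 + derivWithin f s x ^ 2) ^ ((3 : ℝ) / 2)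

theorem curvatureWithin_Icc_eq_graphCurvature {f : ℝ → ℝ} {a b x : ℝ} (hx : x ∈ Ioo a b) :
    curvatureWithin (Icc a b) f x = graphCurvature f x := by
  have hderiv : derivWithin f (Icc a b) =ᶠ[𝓝 x] deriv f := by
    filter_upwards [Ioo_mem_nhds hx.1 hx.2] with y hy
    exact derivWithin_of_mem_nhds (Icc_mem_nhds hy.1 hy.2)
  rw [curvatureWithin, graphCurvature, derivWithin_of_mem_nhds (Icc_mem_nhds hx.1 hx.2),
    hderiv.deriv_eq, hderiv.eq_of_nhds]

theorem ContDiffOn.continuousOn_curvatureWithin {f : ℝ → ℝ} {s : Set ℝ}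
    (hf : ContDiffOn ℝ 2 f s) (hs : UniqueDiffOn ℝ s) : ContinuousOn (curvatureWithin s f) s := by
  have hf' : ContDiffOn ℝ 1 (derivWithin f s) s := hf.derivWithin hs (by norm_num)
  have hρ : ContinuousOn (fun x => (1 + derivWithin f s x ^ 2) ^ ((3 : ℝ) / 2)) s :=
    (continuousOn_const.add ((hf.continuousOn_derivWithin hs (by norm_num)).pow 2)).rpow_const
      fun _ _ => Or.inr (by norm_num)
  exact (hf'.continuousOn_derivWithin hs le_rfl).div hρ fun x _ => by positivity

theorem eventually_sub_lt_sub_of_curvatureWithin_lt {f g : ℝ → ℝ} {a b x : ℝ}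
    (hf : ContDiffOn ℝ 2 f (Icc a b)) (hg : ContDiffOn ℝ 2 g (Icc a b)) (hx : x ∈ Ico a b)
    (htan : derivWithin f (Icc a b) x = derivWithin g (Icc a b) x)
    (hκ : curvatureWithin (Icc a b) f x < curvatureWithin (Icc a b) g x) :
    ∀ᶠ y in 𝓝[>] x, f y - f x < g y - g x := by
  set s := Icc a b
  have hs : UniqueDiffOn ℝ s := uniqueDiffOn_Icc (hx.1.trans_lt hx.2)
  have hxs : x ∈ s := Ico_subset_Icc_self hx
  have hf' : DifferentiableOn ℝ (derivWithin f s) s :=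
    (hf.derivWithin (m := 1) hs (by norm_num)).differentiableOn one_ne_zero
  have hg' : DifferentiableOn ℝ (derivWithin g s) s :=
    (hg.derivWithin (m := 1) hs (by norm_num)).differentiableOn one_ne_zero
  have hderiv : EqOn (derivWithin (g - f) s) (derivWithin g s - derivWithin f s) s := fun y hy =>
    derivWithin_sub (hg.differentiableOn two_ne_zero y hy) (hf.differentiableOn two_ne_zero y hy)
  have h1 : derivWithin (g - f) s x = 0 := by rw [hderiv hxs, Pi.sub_apply, htan, sub_self]
  have h2 : 0 < derivWithin (derivWithin (g - f) s) s x := by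
    rw [derivWithin_congr hderiv (hderiv hxs), derivWithin_sub (hg' x hxs) (hf' x hxs), sub_pos]
    rw [curvatureWithin, curvatureWithin, htan] at hκ
    exact (div_lt_div_iff_of_pos_right (by positivity)).1 hκ
  filter_upwards [eventually_lt_of_derivWithin_eq_zero_of_pos (hg.sub hf) hx h1 h2] with y hy
  linarith

theorem curvatureWithin_le_of_isLocalMax_sub {f g : ℝ → ℝ} {a b x : ℝ}
    (hf : ContDiffOn ℝ 2 f (Icc a b)) (hg : ContDiffOn ℝ 2 g (Icc a b)) (hx : x ∈ Ioo a b)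
    (hmax : IsLocalMax (fun y => f y - g y) x) :
    curvatureWithin (Icc a b) f x ≤ curvatureWithin (Icc a b) g x := by
  have hnhds : Icc a b ∈ 𝓝 x := Icc_mem_nhds hx.1 hx.2
  have hfd := ((hf.differentiableOn two_ne_zero) x (Ioo_subset_Icc_self hx)).differentiableAt hnhds
  have hgd := ((hg.differentiableOn two_ne_zero) x (Ioo_subset_Icc_self hx)).differentiableAt hnhds
  have htan : derivWithin g (Icc a b) x = derivWithin f (Icc a b) x := by
    rw [derivWithin_of_mem_nhds hnhds, derivWithin_of_mem_nhds hnhds]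
    exact (sub_eq_zero.1 (hmax.hasDerivAt_eq_zero (hfd.hasDerivAt.sub hgd.hasDerivAt))).symm
  by_contra! hκ
  obtain ⟨y, hrise, hle⟩ := ((eventually_sub_lt_sub_of_curvatureWithin_lt hg hf
    (Ioo_subset_Ico_self hx) htan hκ).and (hmax.filter_mono nhdsWithin_le_nhds)).exists
  linarith

theorem StrictMonoOn.lt_of_continuousWithinAt_left {α β : Type*} [LinearOrder α]
    [TopologicalSpace α] [OrderTopology α] [DenselyOrdered α] [LinearOrder β] [TopologicalSpace β]
    [OrderClosedTopology β] {h : α → β} {a b t : α} (hmono : StrictMonoOn h (Ioo a b))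
    (hcont : ContinuousWithinAt h (Ioo a b) a) (ht : t ∈ Ioo a b) : h a < h t := by
  obtain ⟨m, ham, hmt⟩ := exists_between ht.1
  have hm : m ∈ Ioo a b := ⟨ham, hmt.trans ht.2⟩
  have hle : h a ≤ h m :=
    ContinuousWithinAt.closure_le (s := Ioo a m)
      (by rw [closure_Ioo ham.ne]; exact left_mem_Icc.2 ham.le)
      (hcont.mono (Ioo_subset_Ioo_right hm.2.le)) continuousWithinAt_const
      fun y hy => (hmono ⟨hy.1, hy.2.trans hm.2⟩ hm hy.2).le
  exact hle.trans_lt (hmono hm ht hmt)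

theorem exists_mem_Ioo_isMaxOn_Icc {w : ℝ → ℝ} {a b x : ℝ} (hw : ContinuousOn w (Icc a b))
    (hx : x ∈ Ioo a b) (ha : w a ≤ w x) (hb : w b ≤ w x) :
    ∃ m ∈ Ioo a b, IsMaxOn w (Icc a b) m := by
  obtain ⟨m, hm, hmax⟩ :=
    isCompact_Icc.exists_isMaxOn (nonempty_Icc.2 (hx.1.trans hx.2).le) hw
  by_cases hmI : m ∈ Ioo a b
  · exact ⟨m, hmI, hmax⟩
  · have hend : m ∈ ({a, b} : Set ℝ) := by
      rw [← Icc_sdiff_Ioo_same (hx.1.trans hx.2).le]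
      exact ⟨hm, hmI⟩
    refine ⟨x, hx, isMaxOn_iff.2 fun y hy => (isMaxOn_iff.1 hmax y hy).trans ?_⟩
    rcases hend with rfl | rfl <;> assumption

theorem lt_of_strictMonoOn_curvatureWithin_sub {f g : ℝ → ℝ} {a b x : ℝ}
    (hf : ContDiffOn ℝ 2 f (Icc a b)) (hg : ContDiffOn ℝ 2 g (Icc a b))
    (ha : f a = g a) (hb : f b = g b)
    (htan : derivWithin f (Icc a b) a = derivWithin g (Icc a b) a)
    (hmono : StrictMonoOn (fun y => curvatureWithin (Icc a b) f y - curvatureWithin (Icc a b) g y)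
      (Ioo a b))
    (hx : x ∈ Ioo a b) : f x < g x := by
  by_contra! hgf
  have hab : a < b := hx.1.trans hx.2
  obtain ⟨m, hm, hmax⟩ := exists_mem_Ioo_isMaxOn_Icc (w := fun y => f y - g y)
    (hf.continuousOn.sub hg.continuousOn) hx
    (by simp only [ha, sub_self]; linarith) (by simp only [hb, sub_self]; linarith)
  have hκm := sub_nonpos.2 <| curvatureWithin_le_of_isLocalMax_sub hf hg hm
    (hmax.isLocalMax (Icc_mem_nhds hm.1 hm.2))
  have hs := uniqueDiffOn_Icc hab
  have hκa := (hmono.lt_of_continuousWithinAt_left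
    ((((hf.continuousOn_curvatureWithin hs).sub (hg.continuousOn_curvatureWithin hs)) a
      (left_mem_Icc.2 hab.le)).mono Ioo_subset_Icc_self) hm).trans_le hκm
  obtain ⟨y, hy, hfy⟩ : ∃ y ∈ Ioo a m, f y < g y := by
    obtain ⟨y, hfg, hy⟩ := ((eventually_sub_lt_sub_of_curvatureWithin_lt hf hg
      (left_mem_Ico.2 hab) htan (sub_neg.1 hκa)).and (Ioo_mem_nhdsGT hm.1)).exists
    exact ⟨y, hy, by linarith⟩
  obtain ⟨μ, hμ, hμmax⟩ := exists_mem_Ioo_isMaxOn_Icc (w := fun y => g y - f y)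
    ((hg.continuousOn.sub hf.continuousOn).mono (Icc_subset_Icc_right hm.2.le)) hy
    (by simp only [ha, sub_self]; linarith)
    (by linarith [isMaxOn_iff.1 hmax x (Ioo_subset_Icc_self hx)])
  have hμ' : μ ∈ Ioo a b := ⟨hμ.1, hμ.2.trans hm.2⟩
  have hκμ := curvatureWithin_le_of_isLocalMax_sub hg hf hμ'
    (hμmax.isLocalMax (Icc_mem_nhds hμ.1 hμ.2))
  linarith [hmono hμ' hm hμ.2]

section Arc

open Real

variable {c φ x : ℝ}

theorem arcA_eq_zero_of_sq_eq (hx : x ^ 2 = c ^ 2) : arcA c φ x = 0 := by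
  simp [arcA, hx]

theorem arcA_zero_angle (c x : ℝ) : arcA c 0 x = 0 := by
  simp [arcA]

theorem arcA_neg_angle : arcA c (-φ) x = -arcA c φ x := by
  simp [arcA, neg_div]

theorem arcA_neg_arg : arcA c φ (-x) = arcA c φ x := by
  simp [arcA]

theorem arc_radicand_pos (hc : 0 < c) (hcos : 0 < cos φ) (hx : x ∈ Icc (-c) c) :
    0 < c ^ 2 - x ^ 2 * sin φ ^ 2 := by
  have hx2 : x ^ 2 ≤ c ^ 2 := sq_le_sq' hx.1 hx.2
  nlinarith [sin_sq_add_cos_sq φ, mul_pos (pow_pos hc 2) (pow_pos hcos 2),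
    mul_le_mul_of_nonneg_right hx2 (sq_nonneg (sin φ))]

theorem hasDerivAt_arcA (hcφ : 0 ≤ c * cos φ) (hx : 0 < c ^ 2 - x ^ 2 * sin φ ^ 2) :
    HasDerivAt (arcA c φ) (-(x * sin φ) / √(c ^ 2 - x ^ 2 * sin φ ^ 2)) x := by
  have hX : HasDerivAt (fun y => c ^ 2 - y ^ 2 * sin φ ^ 2) (-(2 * x * sin φ ^ 2)) x := by
    simpa using ((hasDerivAt_pow 2 x).mul_const (sin φ ^ 2)).const_sub (c ^ 2)
  have hN : HasDerivAt (fun y => (c ^ 2 - y ^ 2) * sin φ) (-(2 * x) * sin φ) x := by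
    simpa using ((hasDerivAt_pow 2 x).const_sub (c ^ 2)).mul_const (sin φ)
  have hRpos : 0 < √(c ^ 2 - x ^ 2 * sin φ ^ 2) := sqrt_pos.2 hx
  refine (hN.div ((hX.sqrt hx.ne').const_add (c * cos φ)) (by positivity)).congr_deriv ?_
  have hRsq := sq_sqrt hx.le
  set R := √(c ^ 2 - x ^ 2 * sin φ ^ 2)
  field_simp
  linear_combination (-(x * sin φ)) * hRsq + x * sin φ * c ^ 2 * sin_sq_add_cos_sq φ

theorem hasDerivAt_arcA_slope (hx : 0 < c ^ 2 - x ^ 2 * sin φ ^ 2) :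
    HasDerivAt (fun y => -(y * sin φ) / √(c ^ 2 - y ^ 2 * sin φ ^ 2))
      (-(sin φ * c ^ 2) / √(c ^ 2 - x ^ 2 * sin φ ^ 2) ^ 3) x := by
  have hX : HasDerivAt (fun y => c ^ 2 - y ^ 2 * sin φ ^ 2) (-(2 * x * sin φ ^ 2)) x := by
    simpa using ((hasDerivAt_pow 2 x).mul_const (sin φ ^ 2)).const_sub (c ^ 2)
  have hRpos : 0 < √(c ^ 2 - x ^ 2 * sin φ ^ 2) := sqrt_pos.2 hx
  have hL : HasDerivAt (fun y => -(y * sin φ)) (-sin φ) x := by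
    simpa using ((hasDerivAt_id x).mul_const (sin φ)).fun_neg
  refine (hL.div (hX.sqrt hx.ne') hRpos.ne').congr_deriv ?_
  have hRsq := sq_sqrt hx.le
  set R := √(c ^ 2 - x ^ 2 * sin φ ^ 2)
  field_simp
  linear_combination (-sin φ) * hRsq

theorem contDiffOn_arcA (hc : 0 < c) (hcos : 0 < cos φ) :
    ContDiffOn ℝ 2 (arcA c φ) (Icc (-c) c) := by
  intro x hx
  have hX := arc_radicand_pos hc hcos hx
  have hR : ContDiffAt ℝ 2 (fun y => √(c ^ 2 - y ^ 2 * sin φ ^ 2)) x :=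
    (by fun_prop : ContDiffAt ℝ 2 (fun y => c ^ 2 - y ^ 2 * sin φ ^ 2) x).sqrt hX.ne'
  refine ContDiffAt.contDiffWithinAt ?_
  exact (by fun_prop : ContDiffAt ℝ 2 (fun y => (c ^ 2 - y ^ 2) * sin φ) x).div
    (contDiffAt_const.add hR) (by positivity)

theorem curvatureWithin_arcA (hc : 0 < c) (hcos : 0 < cos φ) (hx : x ∈ Icc (-c) c) :
    curvatureWithin (Icc (-c) c) (arcA c φ) x = -sin φ / c := by
  have hs := uniqueDiffOn_Icc (neg_lt_self hc)
  have hslope : EqOn (derivWithin (arcA c φ) (Icc (-c) c))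
      (fun y => -(y * sin φ) / √(c ^ 2 - y ^ 2 * sin φ ^ 2)) (Icc (-c) c) := fun y hy =>
    (hasDerivAt_arcA (by positivity) (arc_radicand_pos hc hcos hy)).hasDerivWithinAt.derivWithin
      (hs y hy)
  have hX := arc_radicand_pos hc hcos hx
  rw [curvatureWithin, derivWithin_congr hslope (hslope hx),
    (hasDerivAt_arcA_slope hX).hasDerivWithinAt.derivWithin (hs x hx), hslope hx]
  have hRsq := sq_sqrt hX.le
  set R := √(c ^ 2 - x ^ 2 * sin φ ^ 2)
  have hRpos : 0 < R := sqrt_pos.2 hX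
  have h1 : 1 + (-(x * sin φ) / R) ^ 2 = (c / R) ^ 2 := by
    field_simp
    linear_combination hRsq
  rw [h1, ← rpow_natCast (c / R) 2, ← rpow_mul (by positivity)]
  norm_num
  field_simp

theorem derivWithin_arcA_left (hc : 0 < c) (hcos : 0 < cos φ) :
    derivWithin (arcA c φ) (Icc (-c) c) (-c) = tan φ := by
  have hX := arc_radicand_pos hc hcos (left_mem_Icc.2 (neg_le_self hc.le))
  have hR : √(c ^ 2 - (-c) ^ 2 * sin φ ^ 2) = c * cos φ := by
    rw [← sqrt_sq (by positivity : 0 ≤ c * cos φ)]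
    congr 1
    linear_combination (-c ^ 2) * sin_sq_add_cos_sq φ
  rw [(hasDerivAt_arcA (by positivity) hX).hasDerivWithinAt.derivWithin
      (uniqueDiffOn_Icc (neg_lt_self hc) _ (left_mem_Icc.2 (neg_le_self hc.le))),
    hR, tan_eq_sin_div_cos]
  field_simp

end Arc

theorem deriv_eq_derivWithin_Icc_of_continuousWithinAt {f : ℝ → ℝ} {a b : ℝ} (hab : a < b)
    (hf : ContDiffOn ℝ 1 f (Icc a b)) (hcont : ContinuousWithinAt (deriv f) (Ioi a) a) :
    deriv f a = derivWithin f (Icc a b) a := by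
  have hlim : Tendsto (deriv f) (𝓝[>] a) (𝓝 (derivWithin f (Icc a b) a)) := by
    refine (((hf.continuousOn_derivWithin (uniqueDiffOn_Icc hab) le_rfl) a
      (left_mem_Icc.2 hab.le)).mono_of_mem_nhdsWithin (Icc_mem_nhdsGT hab)).tendsto.congr' ?_
    filter_upwards [Ioo_mem_nhdsGT hab] with y hy
    exact derivWithin_of_mem_nhds (Icc_mem_nhds hy.1 hy.2)
  exact tendsto_nhds_unique hcont hlim

/-- Here `f` is not differentiable at `a` and `deriv (deriv f) a` is the junk value `0`, so
`graphCurvature f a = 0`; monotonicity then makes `f'' > 0` inside and `f` strictly convex. -/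
theorem neg_of_deriv_ne_derivWithin {f : ℝ → ℝ} {a b x : ℝ} (hf : ContDiffOn ℝ 2 f (Icc a b))
    (ha : f a = 0) (hb : f b = 0) (hmono : StrictMonoOn (graphCurvature f) (Icc a b))
    (hT : deriv f a ≠ derivWithin f (Icc a b) a) (hx : x ∈ Ioo a b) : f x < 0 := by
  have hab : a < b := hx.1.trans hx.2
  have hκa : graphCurvature f a = 0 := by
    have : ¬DifferentiableAt ℝ (deriv f) a := fun h => hT <|
      deriv_eq_derivWithin_Icc_of_continuousWithinAt hab (hf.of_le (by norm_num))
        h.continuousAt.continuousWithinAt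
    rw [graphCurvature, deriv_zero_of_not_differentiableAt this, zero_div]
  have hconv : StrictConvexOn ℝ (Icc a b) f := by
    refine strictConvexOn_of_deriv2_pos (convex_Icc a b) hf.continuousOn fun y hy => ?_
    rw [interior_Icc] at hy
    have hκy := hmono (left_mem_Icc.2 hab.le) (Ioo_subset_Icc_self hy) hy.1
    rw [hκa, graphCurvature] at hκy
    simpa using (div_pos_iff_of_pos_right (by positivity)).1 hκy
  simpa [ha, hb] using hconv.lt_on_openSegment (left_mem_Icc.2 hab.le) (right_mem_Icc.2 hab.le)
    hab.ne (by rwa [openSegment_eq_Ioo hab])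

theorem lt_arcA_of_strictMonoOn_graphCurvature {c : ℝ} (hc : 0 < c) {f : ℝ → ℝ}
    (hf : ContDiffOn ℝ 2 f (Icc (-c) c)) (hfl : f (-c) = 0) (hfr : f c = 0)
    (hmono : StrictMonoOn (graphCurvature f) (Icc (-c) c)) {x : ℝ} (hx : x ∈ Ioo (-c) c) :
    f x < arcA c (Real.arctan (deriv f (-c))) x := by
  by_cases hT : deriv f (-c) = derivWithin f (Icc (-c) c) (-c)
  · have hcos := Real.cos_arctan_pos (deriv f (-c))
    refine lt_of_strictMonoOn_curvatureWithin_sub hf (contDiffOn_arcA hc hcos)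
      (by rw [hfl, arcA_eq_zero_of_sq_eq (neg_sq c)]) (by rw [hfr, arcA_eq_zero_of_sq_eq rfl])
      (by rw [derivWithin_arcA_left hc hcos, Real.tan_arctan, hT]) (fun y hy z hz hyz => ?_) hx
    dsimp only
    rw [curvatureWithin_arcA hc hcos (Ioo_subset_Icc_self hy),
      curvatureWithin_arcA hc hcos (Ioo_subset_Icc_self hz),
      curvatureWithin_Icc_eq_graphCurvature hy, curvatureWithin_Icc_eq_graphCurvature hz]
    exact sub_lt_sub_right (hmono (Ioo_subset_Icc_self hy) (Ioo_subset_Icc_self hz) hyz) _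
  · have hd : deriv f (-c) = 0 := deriv_zero_of_not_differentiableAt fun h => hT <|
      (h.derivWithin (uniqueDiffOn_Icc (neg_lt_self hc) _ (left_mem_Icc.2 (by linarith)))).symm
    rw [hd, Real.arctan_zero, arcA_zero_angle]
    exact neg_of_deriv_ne_derivWithin hf hfl hfr hmono hT hx

theorem deriv_neg_comp_neg (f : ℝ → ℝ) (x : ℝ) : deriv (fun y => -f (-y)) x = deriv f (-x) := by
  rw [deriv.fun_neg, deriv_comp_neg, neg_neg]

theorem graphCurvature_neg_comp_neg (f : ℝ → ℝ) (x : ℝ) :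
    graphCurvature (fun y => -f (-y)) x = -graphCurvature f (-x) := by
  rw [graphCurvature, graphCurvature, funext (deriv_neg_comp_neg f), deriv_comp_neg, neg_div]

theorem StrictMonoOn.graphCurvature_neg_comp_neg {f : ℝ → ℝ} {a b : ℝ}
    (h : StrictMonoOn (graphCurvature f) (Icc a b)) :
    StrictMonoOn (graphCurvature fun y => -f (-y)) (Icc (-b) (-a)) := by
  intro x hx y hy hxy
  rw [_root_.graphCurvature_neg_comp_neg, _root_.graphCurvature_neg_comp_neg]
  exact neg_lt_neg (h (neg_mem_Icc_iff.2 hy) (neg_mem_Icc_iff.2 hx) (neg_lt_neg hxy))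

/-- Lens theorem for a spiral arc with strictly increasing curvature:
`A(x; c, −β) < f(x) < A(x; c, α)` for `|x| < c`. -/
theorem lens_theorem_increasing (c : ℝ) (hc : 0 < c) (f : ℝ → ℝ)
    (hf : ContDiffOn ℝ 2 f (Set.Icc (-c) c))
    (hfl : f (-c) = 0) (hfr : f c = 0)
    (hmono : StrictMonoOn (graphCurvature f) (Set.Icc (-c) c)) :
    ∀ x : ℝ, |x| < c →
      arcA c (-Real.arctan (deriv f c)) x < f x ∧
      f x < arcA c (Real.arctan (deriv f (-c))) x := by
  intro x hx
  have hxI : x ∈ Ioo (-c) c := abs_lt.1 hx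
  refine ⟨?_, lt_arcA_of_strictMonoOn_graphCurvature hc hf hfl hfr hmono hxI⟩
  have hrefl := lt_arcA_of_strictMonoOn_graphCurvature hc (f := fun y => -f (-y))
    ((hf.comp contDiff_neg.contDiffOn fun y hy => neg_mem_Icc_iff.2 (by rwa [neg_neg])).neg)
    (by simp [hfr]) (by simp [hfl]) (by simpa using hmono.graphCurvature_neg_comp_neg)
    (x := -x) ⟨neg_lt_neg hxI.2, by linarith [hxI.1]⟩
  simp only [deriv_neg_comp_neg, neg_neg, arcA_neg_arg] at hrefl
  rw [arcA_neg_angle]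
  linarith
end

section
/- Width of a lens: Let c > 0 and let ξ, η ∈ [−π/2, π/2] with ξ + η ≥ 0. Then for every x ∈ [−c, c], A(x; c, ξ) − A(x; c, −η) ≤ c·(tan(ξ/2) + tan(η/2)), with equality at x = 0; that is, the maximal vertical width of the lens bounded by the arcs A(·; c, ξ) and A(·; c, −η) equals c·(tan(ξ/2) + tan(η/2)) and is attained at the midpoint of the chord. -/
open Real

lemma arcA_neg (c φ x : ℝ) : arcA c (-φ) x = - arcA c φ x := by
  simp [arcA, neg_div]

lemma arcA_zero (c φ : ℝ) (hc : 0 < c) (hφ : φ ∈ Set.Icc (-(π/2)) (π/2)) :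
    arcA c φ 0 = c * Real.tan (φ/2) := by
  have hcos2 : 0 < Real.cos (φ/2) := by
    apply Real.cos_pos_of_mem_Ioo
    constructor
    · linarith [hφ.1, Real.pi_pos]
    · linarith [hφ.2, Real.pi_pos]
  have hs : Real.sin φ = 2 * Real.sin (φ/2) * Real.cos (φ/2) := by
    rw [← Real.sin_two_mul]; ring_nf
  have hc1 : Real.cos φ = 2 * Real.cos (φ/2)^2 - 1 := by
    have := Real.cos_sq (φ/2)
    rw [show 2*(φ/2) = φ by ring] at this
    nlinarith [this]
  have hsq : Real.sqrt (c^2 - 0^2 * Real.sin φ ^ 2) = c := by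
    rw [show c^2 - 0^2*Real.sin φ^2 = c^2 by ring, Real.sqrt_sq hc.le]
  rw [arcA, hsq, Real.tan_eq_sin_div_cos, hs, hc1,
    show c * (2 * Real.cos (φ/2)^2 - 1) + c = 2 * c * Real.cos (φ/2)^2 from by ring]
  rw [← mul_div_assoc, div_eq_div_iff (by positivity) (ne_of_gt hcos2)]
  ring

/-- Key identity: the drop of the arc from its midpoint value. -/
lemma arcA_drop (c φ x : ℝ) (hc : 0 < c) (hco : 0 ≤ Real.cos φ)
    (hx : x^2 ≤ c^2) :
    arcA c φ 0 - arcA c φ x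
      = x^2 * Real.sin φ / (c + Real.sqrt (c^2 - x^2 * Real.sin φ ^ 2)) := by
  set s := Real.sin φ with hsdef
  set co := Real.cos φ with hcodef
  have hpyth : s^2 + co^2 = 1 := Real.sin_sq_add_cos_sq φ
  have hs2 : s^2 ≤ 1 := by nlinarith [sq_nonneg co]
  have hA : (0:ℝ) ≤ c^2 - x^2 * s^2 := by nlinarith [sq_nonneg x]
  set u := Real.sqrt (c^2 - x^2 * s^2) with hudef
  have hu0 : 0 ≤ u := Real.sqrt_nonneg _
  have hu2 : u^2 = c^2 - x^2 * s^2 := Real.sq_sqrt hA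
  have hsq0 : Real.sqrt (c^2 - 0^2 * s^2) = c := by
    rw [show c^2 - 0^2*s^2 = c^2 by ring, Real.sqrt_sq hc.le]
  have hd0 : 0 < c * co + c := by nlinarith
  have hd2 : 0 < c + u := by linarith
  rw [arcA, arcA, hsq0, ← hsdef, ← hcodef, ← hudef]
  rcases eq_or_lt_of_le (by positivity : (0:ℝ) ≤ c * co + u) with h0 | hdx
  · -- degenerate: c*co + u = 0 forces co = 0, u = 0, x^2 = c^2, s^2 = 1
    have hco0 : co = 0 := by nlinarith
    have hu0' : u = 0 := by nlinarith
    have hs1 : s^2 = 1 := by nlinarith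
    have hx2 : x^2 = c^2 := by nlinarith
    rw [hco0, hu0', hx2]
    rw [mul_zero, zero_add, add_zero, sub_self, zero_mul, zero_div, sub_zero]
    norm_num
  · rw [div_sub_div _ _ (ne_of_gt hd0) (ne_of_gt hdx), div_eq_div_iff (by positivity) (ne_of_gt hd2)]
    linear_combination (s*c^2) * hu2 - (s*c^2*x^2) * hpyth

/-- Monotonicity of the drop in `sin φ`, for `0 ≤ t ≤ s`. -/
lemma drop_mono (c x s t : ℝ) (hc : 0 < c) (hx : x^2 ≤ c^2)
    (hs1 : s^2 ≤ 1) (ht0 : 0 ≤ t) (hts : t ≤ s) :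
    x^2 * t / (c + Real.sqrt (c^2 - x^2 * t^2))
      ≤ x^2 * s / (c + Real.sqrt (c^2 - x^2 * s^2)) := by
  have ht1 : t^2 ≤ 1 := by nlinarith
  have hAs : (0:ℝ) ≤ c^2 - x^2 * s^2 := by nlinarith [sq_nonneg x]
  have hAt : (0:ℝ) ≤ c^2 - x^2 * t^2 := by nlinarith [sq_nonneg x]
  have hus := Real.sqrt_nonneg (c^2 - x^2 * s^2)
  have hut := Real.sqrt_nonneg (c^2 - x^2 * t^2)
  have hus2 : (Real.sqrt (c^2 - x^2*s^2))^2 = c^2 - x^2*s^2 := Real.sq_sqrt hAs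
  have hut2 : (Real.sqrt (c^2 - x^2*t^2))^2 = c^2 - x^2*t^2 := Real.sq_sqrt hAt
  have hs0 : 0 ≤ s := le_trans ht0 hts
  have hkey : t * Real.sqrt (c^2 - x^2*s^2) ≤ s * Real.sqrt (c^2 - x^2*t^2) := by
    have e1 : t * Real.sqrt (c^2 - x^2*s^2) = Real.sqrt (t^2 * (c^2 - x^2*s^2)) := by
      rw [Real.sqrt_mul (sq_nonneg t), Real.sqrt_sq ht0]
    have e2 : s * Real.sqrt (c^2 - x^2*t^2) = Real.sqrt (s^2 * (c^2 - x^2*t^2)) := by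
      rw [Real.sqrt_mul (sq_nonneg s), Real.sqrt_sq hs0]
    rw [e1, e2]
    apply Real.sqrt_le_sqrt
    nlinarith [mul_le_mul_of_nonneg_left (pow_le_pow_left₀ ht0 hts 2) (sq_nonneg c)]
  have hinner : t * (c + Real.sqrt (c^2 - x^2*s^2)) ≤ s * (c + Real.sqrt (c^2 - x^2*t^2)) := by
    nlinarith [mul_le_mul_of_nonneg_right hts hc.le]
  rw [div_le_div_iff₀ (by positivity) (by positivity)]
  nlinarith [mul_le_mul_of_nonneg_left hinner (sq_nonneg x)]

/-- Width of a lens: the vertical width of the lens bounded by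
`A(·; c, ξ)` and `A(·; c, −η)` is at most `c·(tan(ξ/2) + tan(η/2))`,
with equality at the midpoint of the chord. -/
theorem lens_width (c ξ η : ℝ) (hc : 0 < c)
    (hξ : ξ ∈ Set.Icc (-(Real.pi / 2)) (Real.pi / 2))
    (hη : η ∈ Set.Icc (-(Real.pi / 2)) (Real.pi / 2))
    (hsum : 0 ≤ ξ + η) :
    (∀ x ∈ Set.Icc (-c) c,
      arcA c ξ x - arcA c (-η) x ≤ c * (Real.tan (ξ / 2) + Real.tan (η / 2))) ∧
    arcA c ξ 0 - arcA c (-η) 0 = c * (Real.tan (ξ / 2) + Real.tan (η / 2)) := by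
  have heq : arcA c ξ 0 - arcA c (-η) 0 = c * (Real.tan (ξ / 2) + Real.tan (η / 2)) := by
    rw [arcA_neg, arcA_zero c ξ hc hξ, arcA_zero c η hc hη]; ring
  refine ⟨fun x hx => ?_, heq⟩
  rw [arcA_neg]
  have hx2 : x^2 ≤ c^2 := by nlinarith [hx.1, hx.2]
  have hcoξ : 0 ≤ Real.cos ξ := Real.cos_nonneg_of_mem_Icc hξ
  have hcoη : 0 ≤ Real.cos η := Real.cos_nonneg_of_mem_Icc hη
  have hsinsum : 0 ≤ Real.sin ξ + Real.sin η := by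
    have hmono : Real.sin (-η) ≤ Real.sin ξ := by
      have h1 : -η ∈ Set.Icc (-(π/2)) (π/2) := by
        constructor <;> [linarith [hη.2]; linarith [hη.1]]
      exact Real.strictMonoOn_sin.monotoneOn h1 hξ (by linarith)
    rw [Real.sin_neg] at hmono
    linarith
  have hdξ := arcA_drop c ξ x hc hcoξ hx2
  have hdη := arcA_drop c η x hc hcoη hx2
  have hsξ : (Real.sin ξ)^2 ≤ 1 := by
    nlinarith [Real.sin_sq_add_cos_sq ξ, sq_nonneg (Real.cos ξ)]
  have hsη : (Real.sin η)^2 ≤ 1 := by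
    nlinarith [Real.sin_sq_add_cos_sq η, sq_nonneg (Real.cos η)]
  -- suffices: the drops sum to something nonnegative
  have hkey : 0 ≤ x^2 * Real.sin ξ / (c + Real.sqrt (c^2 - x^2 * Real.sin ξ ^ 2))
      + x^2 * Real.sin η / (c + Real.sqrt (c^2 - x^2 * Real.sin η ^ 2)) := by
    set s := Real.sin ξ
    set t := Real.sin η
    rcases le_or_gt 0 t with ht | ht
    · rcases le_or_gt 0 s with hs | hs
      · have h1 : 0 ≤ x^2 * s / (c + Real.sqrt (c^2 - x^2*s^2)) := by positivity
        have h2 : 0 ≤ x^2 * t / (c + Real.sqrt (c^2 - x^2*t^2)) := by positivity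
        linarith
      · -- s < 0 ≤ t, and s + t ≥ 0, so 0 ≤ -s ≤ t
        have hmono := drop_mono c x t (-s) hc hx2 hsη (by linarith) (by linarith)
        have hneg : x^2 * (-s) / (c + Real.sqrt (c^2 - x^2*(-s)^2))
            = - (x^2 * s / (c + Real.sqrt (c^2 - x^2*s^2))) := by
          rw [show x^2*(-s)^2 = x^2*s^2 by ring]; ring
        rw [hneg] at hmono
        linarith
    · -- t < 0 ≤ s (since s + t ≥ 0), 0 ≤ -t ≤ s
      have hmono := drop_mono c x s (-t) hc hx2 hsξ (by linarith) (by linarith)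
      have hneg : x^2 * (-t) / (c + Real.sqrt (c^2 - x^2*(-t)^2))
          = - (x^2 * t / (c + Real.sqrt (c^2 - x^2*t^2))) := by
        rw [show x^2*(-t)^2 = x^2*t^2 by ring]; ring
      rw [hneg] at hmono
      linarith
  have : arcA c ξ x + arcA c η x ≤ arcA c ξ 0 + arcA c η 0 := by linarith
  calc arcA c ξ x - -arcA c η x = arcA c ξ x + arcA c η x := by ring
    _ ≤ arcA c ξ 0 + arcA c η 0 := this
    _ = c * (Real.tan (ξ / 2) + Real.tan (η / 2)) := by
        rw [arcA_zero c ξ hc hξ, arcA_zero c η hc hη]; ring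
end

section
/- A spiral crosses its osculating circles from right to left: Let γ : ℝ → ℝ^2 be a unit-speed plane curve whose signed curvature k is nondecreasing on an interval I. Then for all s₀, s ∈ I: if s ≥ s₀ then det(γ'(s₀), γ(s) − γ(s₀)) ≥ (k(s₀)/2)·‖γ(s) − γ(s₀)‖² (the point γ(s) lies on or to the left of the directed osculating circle of γ at s₀), and if s ≤ s₀ then det(γ'(s₀), γ(s) − γ(s₀)) ≤ (k(s₀)/2)·‖γ(s) − γ(s₀)‖² (the point γ(s) lies on or to the right of that circle). -/
open scoped InnerProductSpace

/-- Planar cross product: `det((a₁,a₂),(b₁,b₂)) = a₁·b₂ − a₂·b₁`. -/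
noncomputable def det2 (a b : EuclideanSpace ℝ (Fin 2)) : ℝ :=
  a 0 * b 1 - a 1 * b 0

/-- Signed curvature of a unit-speed plane curve: `k(s) = det(γ'(s), γ''(s))`. -/
noncomputable def signedCurv (γ : ℝ → EuclideanSpace ℝ (Fin 2)) (s : ℝ) : ℝ :=
  det2 (deriv γ s) (deriv (deriv γ) s)

/-!
Fix the point `x = γ(s)` and put `A(w) = det(γ'(w), x - γ(w))`, `B(w) = ‖x - γ(w)‖²`.
The Frenet equation `γ'' = k Jγ'` gives `A' = (k/2) B'`, so formally
`d(A - (k/2) B) = -(B/2) dk ≤ 0`: the quantity `A - (k/2) B` is nonincreasing in `w`, and it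
vanishes at `w = s`. Since `k` is merely monotone, the Stieltjes step is replaced by an estimate
on short intervals: freezing `k` at the right end `q` of `[p, q]`, the mean value theorem bounds
the increase of `A - (k/2) B` over `[p, q]` by `M (k q - k p) (q - p)`, and these bounds
telescope to `0` under refinement.
-/

open Set Filter Topology

section Antitone

variable {F g : ℝ → ℝ} {s : Set ℝ} {C : ℝ}

theorem sub_le_div_of_sub_le_mul_sub (hs : s.OrdConnected)
    (h : ∀ p ∈ s, ∀ q ∈ s, p ≤ q → F q - F p ≤ C * (g q - g p) * (q - p)) (n : ℕ) :
    ∀ u ∈ s, ∀ v ∈ s, u ≤ v → F v - F u ≤ C * (g v - g u) * (v - u) / (n + 1) := by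
  induction n with
  | zero => simpa using h
  | succ n ih =>
    intro u hu v hv huv
    set δ := (v - u) / (n + 2) with hδ_def
    have hδ : (n + 2) * δ = v - u := by rw [hδ_def]; field_simp
    have hδ0 : 0 ≤ δ := by positivity
    have hn0 : (0 : ℝ) ≤ n := n.cast_nonneg
    have hm : u + δ ∈ s := hs.out hu hv ⟨by linarith, by nlinarith⟩
    have hleft := h u hu (u + δ) hm (by linarith)
    have hright := ih (u + δ) hm v hv (by nlinarith)
    calc F v - F u = (F v - F (u + δ)) + (F (u + δ) - F u) := by ring
      _ ≤ _ := add_le_add hright hleft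
      _ = C * (g v - g u) * (v - u) / ((n + 1 : ℕ) + 1) := by
        rw [show v - (u + δ) = (n + 1) * δ by linarith, add_sub_cancel_left, ← hδ]
        push_cast; field_simp; ring

theorem antitoneOn_of_sub_le_mul_sub (hs : s.OrdConnected)
    (h : ∀ p ∈ s, ∀ q ∈ s, p ≤ q → F q - F p ≤ C * (g q - g p) * (q - p)) :
    AntitoneOn F s := by
  intro u hu v hv huv
  have hlim : Tendsto (fun n : ℕ => C * (g v - g u) * (v - u) / ((n : ℝ) + 1)) atTop (𝓝 0) := by
    simpa using (tendsto_add_atTop_iff_nat 1).2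
      (tendsto_const_div_atTop_nhds_zero_nat (C * (g v - g u) * (v - u)))
  exact sub_nonpos.1 <|
    ge_of_tendsto' hlim fun n => sub_le_div_of_sub_le_mul_sub hs h n u hu v hv huv

variable {A B B' k : ℝ → ℝ}

theorem sub_mul_sub_le_of_hasDerivAt {p q M : ℝ} (hpq : p ≤ q) (hk : MonotoneOn k (Icc p q))
    (hB0 : 0 ≤ B p) (hB : ∀ w ∈ Icc p q, HasDerivAt B (B' w) w)
    (hA : ∀ w ∈ Icc p q, HasDerivAt A (k w * B' w) w) (hM : ∀ w ∈ Icc p q, |B' w| ≤ M) :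
    (A q - k q * B q) - (A p - k p * B p) ≤ M * (k q - k p) * (q - p) := by
  have hp : p ∈ Icc p q := left_mem_Icc.2 hpq
  have hq : q ∈ Icc p q := right_mem_Icc.2 hpq
  have hG : ∀ w ∈ Icc p q, HasDerivWithinAt (fun w => A w - k q * B w)
      ((k w - k q) * B' w) (Icc p q) w := fun w hw =>
    ((hA w hw).sub ((hB w hw).const_mul (k q))).hasDerivWithinAt.congr_deriv (by ring)
  have hG' : ∀ w ∈ Ico p q, ‖(k w - k q) * B' w‖ ≤ M * (k q - k p) := fun w hw => by
    have hw := Ico_subset_Icc_self hw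
    rw [norm_mul, Real.norm_eq_abs, Real.norm_eq_abs, abs_sub_comm, mul_comm]
    refine mul_le_mul (hM w hw) ?_ (abs_nonneg _) ((abs_nonneg _).trans (hM w hw))
    rw [abs_of_nonneg (sub_nonneg.2 (hk hw hq hw.2))]
    linarith [hk hp hw hw.1]
  have hmvt := norm_image_sub_le_of_norm_deriv_le_segment' hG hG' q hq
  rw [Real.norm_eq_abs] at hmvt
  have hkpq : 0 ≤ (k q - k p) * B p := mul_nonneg (sub_nonneg.2 (hk hp hq hpq)) hB0
  linarith [le_abs_self (A q - k q * B q - (A p - k q * B p))]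

theorem antitoneOn_sub_mul_of_hasDerivAt {a b : ℝ} (hk : MonotoneOn k (Icc a b))
    (hB0 : ∀ w ∈ Icc a b, 0 ≤ B w) (hB : ∀ w ∈ Icc a b, HasDerivAt B (B' w) w)
    (hA : ∀ w ∈ Icc a b, HasDerivAt A (k w * B' w) w) (hB' : ContinuousOn B' (Icc a b)) :
    AntitoneOn (fun w => A w - k w * B w) (Icc a b) := by
  obtain ⟨M, hM⟩ := isCompact_Icc.exists_bound_of_continuousOn hB'
  refine antitoneOn_of_sub_le_mul_sub (C := M) (g := k) ordConnected_Icc fun p hp q hq hpq => ?_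
  have hsub : Icc p q ⊆ Icc a b := Icc_subset_Icc hp.1 hq.2
  exact sub_mul_sub_le_of_hasDerivAt hpq (hk.mono hsub) (hB0 p hp) (fun w hw => hB w (hsub hw))
    (fun w hw => hA w (hsub hw)) fun w hw => hM w (hsub hw)

end Antitone

theorem HasDerivAt.det2 {f g : ℝ → EuclideanSpace ℝ (Fin 2)} {f' g' : EuclideanSpace ℝ (Fin 2)}
    {t : ℝ} (hf : HasDerivAt f f' t) (hg : HasDerivAt g g' t) :
    HasDerivAt (fun t => det2 (f t) (g t)) (det2 f' (g t) + det2 (f t) g') t := by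
  have coord : ∀ {h : ℝ → EuclideanSpace ℝ (Fin 2)} {h'} (i : Fin 2), HasDerivAt h h' t →
      HasDerivAt (fun t => h t i) (h' i) t := fun i hh =>
    (EuclideanSpace.proj (𝕜 := ℝ) i).hasFDerivAt.comp_hasDerivAt t hh
  refine (((coord 0 hf).mul (coord 1 hg)).sub ((coord 1 hf).mul (coord 0 hg))).congr_deriv ?_
  simp only [_root_.det2]
  ring

theorem inner_eq_zero_of_hasDerivAt_of_norm_eq {E : Type*} [NormedAddCommGroup E]
    [InnerProductSpace ℝ E] {T : ℝ → E} {T' : E} {c t : ℝ} (hT : ∀ w, ‖T w‖ = c)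
    (h : HasDerivAt T T' t) : ⟪T t, T'⟫_ℝ = 0 := by
  have hconst : HasDerivAt (‖T ·‖ ^ 2) 0 t := by
    simpa only [hT] using hasDerivAt_const t (c ^ 2)
  simpa using h.norm_sq.unique hconst

theorem det2_eq_neg_det2_mul_inner {t n : EuclideanSpace ℝ (Fin 2)} (ht : ‖t‖ = 1)
    (hn : ⟪t, n⟫_ℝ = 0) (x : EuclideanSpace ℝ (Fin 2)) :
    det2 n x = -(det2 t n * ⟪t, x⟫_ℝ) := by
  have ht' : t 0 ^ 2 + t 1 ^ 2 = 1 := by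
    simpa [EuclideanSpace.norm_sq_eq, Fin.sum_univ_two, ht] using (EuclideanSpace.norm_sq_eq t).symm
  simp only [PiLp.inner_apply, Fin.sum_univ_two, RCLike.inner_apply, conj_trivial] at hn ⊢
  simp only [det2]
  linear_combination (x 0 * n 1 - x 1 * n 0) * ht' + (t 0 * x 1 - t 1 * x 0) * hn

/-- `-k(s₀)/2` times the power of `x` with respect to the osculating circle of `γ` at `s₀`;
it is nonnegative exactly when `x` lies on or to the left of that directed circle
(of the tangent line when `k(s₀) = 0`). -/
noncomputable def osculatingExcess (γ : ℝ → EuclideanSpace ℝ (Fin 2)) (s₀ : ℝ)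
    (x : EuclideanSpace ℝ (Fin 2)) : ℝ :=
  det2 (deriv γ s₀) (x - γ s₀) - signedCurv γ s₀ / 2 * ‖x - γ s₀‖ ^ 2

theorem osculatingExcess_self (γ : ℝ → EuclideanSpace ℝ (Fin 2)) (s : ℝ) :
    osculatingExcess γ s (γ s) = 0 := by
  simp [osculatingExcess, det2]

section UnitSpeed

variable {γ : ℝ → EuclideanSpace ℝ (Fin 2)}

theorem deriv_deriv_det2_eq (hγ : ContDiff ℝ 2 γ) (hunit : ∀ s, ‖deriv γ s‖ = 1) (s : ℝ)
    (x : EuclideanSpace ℝ (Fin 2)) :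
    det2 (deriv (deriv γ) s) x = -(signedCurv γ s * ⟪deriv γ s, x⟫_ℝ) :=
  det2_eq_neg_det2_mul_inner (hunit s) (inner_eq_zero_of_hasDerivAt_of_norm_eq hunit
    (hγ.differentiable_deriv_two s).hasDerivAt) x

theorem hasDerivAt_det2_deriv_sub (hγ : ContDiff ℝ 2 γ) (hunit : ∀ s, ‖deriv γ s‖ = 1)
    (x : EuclideanSpace ℝ (Fin 2)) (s : ℝ) :
    HasDerivAt (fun s => det2 (deriv γ s) (x - γ s))
      (signedCurv γ s / 2 * (2 * ⟪x - γ s, -deriv γ s⟫_ℝ)) s := by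
  have hγ' := ((hγ.differentiable (by norm_num)) s).hasDerivAt
  refine ((hγ.differentiable_deriv_two s).hasDerivAt.det2 (hγ'.const_sub x)).congr_deriv ?_
  have hzero : det2 (deriv γ s) (-deriv γ s) = 0 := by simp only [det2, PiLp.neg_apply]; ring
  rw [deriv_deriv_det2_eq hγ hunit, hzero, inner_neg_right, real_inner_comm]
  ring

theorem antitoneOn_osculatingExcess (hγ : ContDiff ℝ 2 γ) (hunit : ∀ s, ‖deriv γ s‖ = 1)
    {a b : ℝ} (hmono : MonotoneOn (signedCurv γ) (Icc a b)) (x : EuclideanSpace ℝ (Fin 2)) :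
    AntitoneOn (fun s => osculatingExcess γ s x) (Icc a b) := by
  have hγ' s : HasDerivAt γ (deriv γ s) s := ((hγ.differentiable (by norm_num)) s).hasDerivAt
  refine antitoneOn_sub_mul_of_hasDerivAt (k := fun s => signedCurv γ s / 2)
    (B := fun s => ‖x - γ s‖ ^ 2)
    (fun p hp q hq hpq => div_le_div_of_nonneg_right (hmono hp hq hpq) zero_le_two)
    (fun _ _ => by positivity) (fun s _ => ((hγ' s).const_sub x).norm_sq)
    (fun s _ => hasDerivAt_det2_deriv_sub hγ hunit x s) ?_
  exact (continuous_const.mul (continuous_inner.comp₂ (continuous_const.sub hγ.continuous)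
    (hγ.continuous_deriv (by norm_num)).neg)).continuousOn

end UnitSpeed

/-- A spiral crosses its osculating circles from right to left: for a
unit-speed curve with nondecreasing signed curvature on an interval,
`γ(s)` lies on or to the left (resp. right) of the directed osculating
circle at `γ(s₀)` for `s ≥ s₀` (resp. `s ≤ s₀`). -/
theorem spiral_crosses_osculating_circles
    (γ : ℝ → EuclideanSpace ℝ (Fin 2)) (hγ : ContDiff ℝ 2 γ)
    (hunit : ∀ s, ‖deriv γ s‖ = 1)
    (a b : ℝ) (hmono : MonotoneOn (signedCurv γ) (Set.Icc a b))
    (s₀ s : ℝ) (hs₀ : s₀ ∈ Set.Icc a b) (hs : s ∈ Set.Icc a b) :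
    (s₀ ≤ s →
      signedCurv γ s₀ / 2 * ‖γ s - γ s₀‖ ^ 2 ≤ det2 (deriv γ s₀) (γ s - γ s₀)) ∧
    (s ≤ s₀ →
      det2 (deriv γ s₀) (γ s - γ s₀) ≤ signedCurv γ s₀ / 2 * ‖γ s - γ s₀‖ ^ 2) := by
  have hanti := antitoneOn_osculatingExcess hγ hunit hmono (γ s)
  have hself := osculatingExcess_self γ s
  refine ⟨fun h => ?_, fun h => ?_⟩
  · have : osculatingExcess γ s (γ s) ≤ osculatingExcess γ s₀ (γ s) := hanti hs₀ hs h
    rwa [hself, osculatingExcess, sub_nonneg] at this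
  · have : osculatingExcess γ s₀ (γ s) ≤ osculatingExcess γ s (γ s) := hanti hs hs₀ h
    rwa [hself, osculatingExcess, sub_nonpos] at this
end
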